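/- arXiv:2506.20730 — 5 statements merged into one kernel-verified Lean document; each statement's English description precedes it below -/
import Mathlib

section
/- Let $g$ and $H$ be $n\times n$ complex matrices. Then the commutator $[g,H]=gH-Hg$ belongs to the real linear span of the conjugation orbit $\{e^{t g}\,H\,e^{-t g} : t\in\mathbb{R}\}$ inside $M_n(\mathbb{C})$ viewed as a real vector space. -/
open NormedSpace

attribute [local instance] Matrix.linftyOpNormedRing Matrix.linftyOpNormedAlgebra

/-- For `n × n` complex matrices `g` and `H`, the commutator `gH - Hg` lies in the real
linear span of the conjugation orbit `{e^{t g} H e^{-t g} : t ∈ ℝ}` inside `Mₙ(ℂ)`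
viewed as a real vector space. -/
theorem commutator_mem_span_conj_orbit (n : ℕ) (g H : Matrix (Fin n) (Fin n) ℂ) :
    g * H - H * g ∈ Submodule.span ℝ
      { X : Matrix (Fin n) (Fin n) ℂ |
        ∃ t : ℝ, X = NormedSpace.exp (t • g) * H * NormedSpace.exp (-(t • g)) } := by
  set S : Submodule ℝ (Matrix (Fin n) (Fin n) ℂ) := Submodule.span ℝ
      { X : Matrix (Fin n) (Fin n) ℂ |
        ∃ t : ℝ, X = NormedSpace.exp (t • g) * H * NormedSpace.exp (-(t • g)) } with hS
  set f : ℝ → Matrix (Fin n) (Fin n) ℂ :=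
    fun t => exp (t • g) * H * exp (-(t • g)) with hf
  have hmem : ∀ t : ℝ, f t ∈ S := fun t => Submodule.subset_span ⟨t, rfl⟩
  have hexp : (exp : Matrix (Fin n) (Fin n) ℂ → _) = exp := rfl
  have h1 : HasDerivAt (fun t : ℝ => exp (t • g)) (exp ((0:ℝ) • g) * g) 0 := by
    exact hasDerivAt_exp_smul_const g 0
  have h2 : HasDerivAt (fun t : ℝ => exp (-(t • g)))
      (exp (-((0:ℝ) • g)) * (-g)) 0 := by
    have h2' := hasDerivAt_exp_smul_const (-g) (0:ℝ)
    simp only [smul_neg] at h2'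
    exact h2'
  have hD : HasDerivAt f (g * H - H * g) 0 := by
    have : HasDerivAt f _ 0 := (h1.mul_const H).mul h2
    convert this using 1
    simp [zero_smul, neg_zero, exp_zero, mul_neg, sub_eq_add_neg]
  have hslope : Filter.Tendsto (slope f 0) (nhdsWithin 0 {(0:ℝ)}ᶜ)
      (nhds (g * H - H * g)) := hasDerivAt_iff_tendsto_slope.mp hD
  have hclosed : IsClosed (S : Set (Matrix (Fin n) (Fin n) ℂ)) :=
    S.closed_of_finiteDimensional
  have : g * H - H * g ∈ closure (S : Set (Matrix (Fin n) (Fin n) ℂ)) := by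
    refine mem_closure_of_tendsto hslope ?_
    filter_upwards with t
    exact S.smul_mem _ (S.sub_mem (hmem t) (hmem 0))
  rwa [hclosed.closure_eq] at this
end

section
/- Let $G$ be a set of $n\times n$ complex matrices, $H\in M_n(\mathbb{C})$, and let $P$ be the smallest real submodule of $M_n(\mathbb{C})$ that contains $H$ and is stable under $X\mapsto [g,X]$ for every $g\in G$. Then for every finite list $g_1,\dots,g_k$ of elements of $G$, the conjugate $e^{-g_k}\cdots e^{-g_1}\,H\,e^{g_1}\cdots e^{g_k}$ belongs to $P$. -/
open NormedSpace Finset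

private lemma exp_conj_single_mem
    (n : ℕ) (g x : Matrix (Fin n) (Fin n) ℂ)
    (p : Submodule ℝ (Matrix (Fin n) (Fin n) ℂ))
    (hst : ∀ y ∈ p, g * y - y * g ∈ p) (hx : x ∈ p) :
    NormedSpace.exp (-g) * x * NormedSpace.exp g ∈ p := by
  letI : SeminormedRing (Matrix (Fin n) (Fin n) ℂ) := Matrix.linftyOpSemiNormedRing
  letI : NormedRing (Matrix (Fin n) (Fin n) ℂ) := Matrix.linftyOpNormedRing
  letI : NormedAlgebra ℂ (Matrix (Fin n) (Fin n) ℂ) := Matrix.linftyOpNormedAlgebra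
  letI : NormedSpace ℝ (Matrix (Fin n) (Fin n) ℂ) := Matrix.linftyOpNormedSpace
  -- the two series
  set c : ℕ → Matrix (Fin n) (Fin n) ℂ :=
    fun i => (Nat.factorial i : ℂ)⁻¹ • ((-g) ^ i * x) with hc
  set b : ℕ → Matrix (Fin n) (Fin n) ℂ :=
    fun j => (Nat.factorial j : ℂ)⁻¹ • g ^ j with hb
  have hcnorm : Summable fun i => ‖c i‖ := by
    refine Summable.of_nonneg_of_le (fun _ => norm_nonneg _) (fun i => ?_)
      ((NormedSpace.norm_expSeries_summable' (𝕂 := ℂ) (-g)).mul_right ‖x‖)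
    have : c i = ((Nat.factorial i : ℂ)⁻¹ • (-g) ^ i) * x := by
      rw [hc, smul_mul_assoc]
    rw [this]
    exact norm_mul_le _ _
  have hbnorm : Summable fun j => ‖b j‖ := NormedSpace.norm_expSeries_summable' (𝕂 := ℂ) g
  -- the conjugation as a Cauchy product
  have h1 : NormedSpace.exp (-g) * x * NormedSpace.exp g
      = (∑' i, c i) * (∑' j, b j) := by
    simp only [NormedSpace.exp_eq_tsum ℂ]
    congr 1
    erw [← Summable.tsum_mul_right x (NormedSpace.expSeries_summable' (𝕂 := ℂ) (-g))]
    exact tsum_congr fun i => (smul_mul_assoc _ _ _)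
  have h2 : NormedSpace.exp (-g) * x * NormedSpace.exp g
      = ∑' k, ∑ kl ∈ Finset.HasAntidiagonal.antidiagonal k, c kl.1 * b kl.2 := by
    rw [h1]; exact tsum_mul_tsum_eq_tsum_sum_antidiagonal_of_summable_norm hcnorm hbnorm
  -- the ad operator
  set A : Module.End ℝ (Matrix (Fin n) (Fin n) ℂ) := LinearMap.mulLeft ℝ (-g) with hA
  set B : Module.End ℝ (Matrix (Fin n) (Fin n) ℂ) := LinearMap.mulRight ℝ g with hB
  have hcomm : Commute A B := by
    ext y
    simp [hA, hB, Module.End.mul_apply, LinearMap.mulLeft_apply, LinearMap.mulRight_apply,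
      mul_assoc]
  -- each term of the series lies in p
  have hmem : ∀ k, ((A + B) ^ k) x ∈ p := by
    intro k
    induction k with
    | zero => simpa using hx
    | succ k ih =>
      rw [pow_succ', Module.End.mul_apply]
      have hstep : (A + B) (((A + B) ^ k) x)
          = -(g * (((A + B) ^ k) x) - (((A + B) ^ k) x) * g) := by
        simp only [LinearMap.add_apply, hA, hB, LinearMap.mulLeft_apply,
          LinearMap.mulRight_apply, neg_mul]
        abel
      rw [hstep]
      exact neg_mem (hst _ ih)
  -- identify the Cauchy-product terms
  have hterm : ∀ k, (∑ kl ∈ Finset.HasAntidiagonal.antidiagonal k, c kl.1 * b kl.2)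
      = (Nat.factorial k : ℝ)⁻¹ • (((A + B) ^ k) x) := by
    intro k
    rw [hcomm.add_pow, LinearMap.sum_apply, Finset.smul_sum,
      Finset.Nat.sum_antidiagonal_eq_sum_range_succ (fun i j => c i * b j)]
    refine Finset.sum_congr rfl fun i hi => ?_
    rw [Finset.mem_range, Nat.lt_succ_iff] at hi
    have happ : (A ^ i * B ^ (k - i) * (k.choose i : Module.End ℝ (Matrix (Fin n) (Fin n) ℂ))) x
        = k.choose i • ((-g) ^ i * x * g ^ (k - i)) := by
      rw [Module.End.mul_apply, Module.End.mul_apply, Module.End.natCast_apply,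
        hA, hB, LinearMap.pow_mulLeft, LinearMap.pow_mulRight, map_nsmul, map_nsmul,
        LinearMap.mulRight_apply, LinearMap.mulLeft_apply]
      rw [mul_assoc]
    have hcb : c i * b (k - i)
        = ((Nat.factorial i : ℂ)⁻¹ * (Nat.factorial (k - i) : ℂ)⁻¹)
            • ((-g) ^ i * x * g ^ (k - i)) := by
      rw [hc, hb, smul_mul_smul_comm]
    rw [happ, hcb, ← Nat.cast_smul_eq_nsmul ℂ (k.choose i) ((-g) ^ i * x * g ^ (k - i)),
      ← algebraMap_smul ℂ ((Nat.factorial k : ℝ))⁻¹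
        ((k.choose i : ℂ) • ((-g) ^ i * x * g ^ (k - i))), smul_smul]
    congr 1
    have hfact := Nat.choose_mul_factorial_mul_factorial hi
    have h0 : (Nat.factorial i : ℂ) ≠ 0 := Nat.cast_ne_zero.mpr (Nat.factorial_ne_zero i)
    have h1' : (Nat.factorial (k - i) : ℂ) ≠ 0 := Nat.cast_ne_zero.mpr (Nat.factorial_ne_zero _)
    have h2' : (Nat.factorial k : ℂ) ≠ 0 := Nat.cast_ne_zero.mpr (Nat.factorial_ne_zero k)
    have hfc : (k.choose i : ℂ) * (Nat.factorial i : ℂ) * (Nat.factorial (k - i) : ℂ)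
        = (Nat.factorial k : ℂ) := by exact_mod_cast congrArg (Nat.cast (R := ℂ)) hfact
    have halg : (algebraMap ℝ ℂ) (Nat.factorial k : ℝ)⁻¹ = ((Nat.factorial k : ℂ))⁻¹ := by
      rw [map_inv₀, Complex.coe_algebraMap, Complex.ofReal_natCast]
    rw [halg]
    field_simp
    linear_combination (-1:ℂ) * hfc
  -- summability of the product series
  have hsum : Summable fun k => ∑ kl ∈ Finset.HasAntidiagonal.antidiagonal k, c kl.1 * b kl.2 :=
    (summable_norm_sum_mul_antidiagonal_of_summable_norm hcnorm hbnorm).of_norm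
  -- conclude by closedness of p
  have hclosed : IsClosed (p : Set (Matrix (Fin n) (Fin n) ℂ)) :=
    Submodule.closed_of_finiteDimensional p
  rw [h2]
  refine hclosed.mem_of_tendsto hsum.hasSum (Filter.Eventually.of_forall fun s => ?_)
  exact Submodule.sum_mem p fun k _ => by
    rw [hterm k]; exact Submodule.smul_mem p _ (hmem k)

/-- Let `G` be a set of `n × n` complex matrices, `H ∈ Mₙ(ℂ)`, and let `P` be the smallest
real submodule of `Mₙ(ℂ)` containing `H` and stable under `X ↦ [g, X]` for every `g ∈ G`.
Then for every finite list `g₁, …, g_k` of elements of `G`,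
`e^{-g_k} ⋯ e^{-g₁} H e^{g₁} ⋯ e^{g_k} ∈ P`. -/
theorem exp_conj_list_mem_smallest_ad_stable_submodule
    (n : ℕ) (G : Set (Matrix (Fin n) (Fin n) ℂ)) (H : Matrix (Fin n) (Fin n) ℂ)
    (P : Submodule ℝ (Matrix (Fin n) (Fin n) ℂ))
    (hP : P = sInf { p : Submodule ℝ (Matrix (Fin n) (Fin n) ℂ) |
      H ∈ p ∧ ∀ g ∈ G, ∀ x ∈ p, g * x - x * g ∈ p })
    (l : List (Matrix (Fin n) (Fin n) ℂ)) (hl : ∀ g ∈ l, g ∈ G) :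
    (l.reverse.map fun g => NormedSpace.exp (-g)).prod * H *
      (l.map fun g => NormedSpace.exp g).prod ∈ P := by
  have hstab : ∀ g ∈ G, ∀ x ∈ P, g * x - x * g ∈ P := by
    intro g hg x hx
    rw [hP, Submodule.mem_sInf]
    intro p hp
    refine hp.2 g hg x ?_
    rw [hP, Submodule.mem_sInf] at hx
    exact hx p hp
  have hH : H ∈ P := by
    rw [hP, Submodule.mem_sInf]; exact fun p hp => hp.1
  clear hP
  induction l generalizing H with
  | nil => simpa using hH
  | cons g t ih =>
    have hg : g ∈ G := hl g (List.mem_cons_self)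
    have ht : ∀ x ∈ t, x ∈ G := fun x hx => hl x (List.mem_cons_of_mem g hx)
    have key : NormedSpace.exp (-g) * H * NormedSpace.exp g ∈ P :=
      exp_conj_single_mem n g H P (fun y hy => hstab g hg y hy) hH
    have := ih (NormedSpace.exp (-g) * H * NormedSpace.exp g) ht key
    simpa [List.reverse_cons, List.map_append, List.prod_append, mul_assoc] using this
end

section
/- Let $\mathfrak{g}$ be a set of $n\times n$ complex matrices closed under multiplication by real scalars, and let $H\in M_n(\mathbb{C})$. Define $\mathscr{O}$ as the real linear span of $\{\,e^{g_k}\cdots e^{g_1}\,H\,e^{-g_1}\cdots e^{-g_k} : k\ge 0,\ g_1,\dots,g_k\in\mathfrak{g}\,\}$. Then for every $L\ge 0$ and all $g_1,\dots,g_L\in\mathfrak{g}$, the iterated commutator $[g_1,[g_2,\cdots[g_L,H]\cdots]]$ belongs to $\mathscr{O}$. -/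
open NormedSpace

lemma ad_mem_aux {n : ℕ} (𝒪 : Submodule ℝ (Matrix (Fin n) (Fin n) ℂ))
    (g X : Matrix (Fin n) (Fin n) ℂ)
    (h : ∀ t : ℝ, exp (t • g) * X * exp (-(t • g)) ∈ 𝒪) :
    g * X - X * g ∈ 𝒪 := by
  letI : NormedRing (Matrix (Fin n) (Fin n) ℂ) := Matrix.linftyOpNormedRing
  letI : NormedAlgebra ℝ (Matrix (Fin n) (Fin n) ℂ) := Matrix.linftyOpNormedAlgebra
  letI : NormedAlgebra ℂ (Matrix (Fin n) (Fin n) ℂ) := Matrix.linftyOpNormedAlgebra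
  letI : CompleteSpace (Matrix (Fin n) (Fin n) ℂ) := by infer_instance
  have hexp : (exp : Matrix (Fin n) (Fin n) ℂ → _) = exp :=
    rfl
  set f : ℝ → Matrix (Fin n) (Fin n) ℂ :=
    fun t => exp (t • g) * X * exp ((-t) • g) with hf
  have hmem : ∀ t, f t ∈ 𝒪 := by
    intro t
    have := h t
    simpa [hf, hexp, neg_smul] using this
  have h1 : HasDerivAt (fun t : ℝ => exp (t • g)) g 0 := by
    have := hasDerivAt_exp_smul_const (𝕂 := ℝ) g 0
    simp at this
    exact this
  have h2 : HasDerivAt (fun t : ℝ => exp ((-t) • g)) (-g) 0 := by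
    have := (hasDerivAt_exp_smul_const (𝕂 := ℝ) g (-0)).scomp (0 : ℝ)
      (hasDerivAt_neg (0 : ℝ))
    simp [Function.comp_def, neg_smul] at this
    simp only [neg_smul]
    exact this
  have hd : HasDerivAt f (g * X - X * g) 0 := by
    have := (h1.mul_const X).mul h2
    simp [hf, sub_eq_add_neg] at this
    simp only [hf, neg_smul, sub_eq_add_neg]
    exact this
  have hcl : IsClosed (𝒪 : Set (Matrix (Fin n) (Fin n) ℂ)) :=
    Submodule.closed_of_finiteDimensional 𝒪
  have hslope := hasDerivAt_iff_tendsto_slope.mp hd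
  refine hcl.mem_of_tendsto hslope ?_
  filter_upwards [Filter.univ_mem] with t _
  have : slope f 0 t = (t - 0)⁻¹ • (f t - f 0) := slope_def_module f 0 t
  rw [this]
  exact 𝒪.smul_mem _ (𝒪.sub_mem (hmem t) (hmem 0))

/-- Let `𝔤` be a set of `n × n` complex matrices closed under multiplication by real
scalars, and `H ∈ Mₙ(ℂ)`. Let `𝒪` be the real linear span of all conjugates
`e^{g_k} ⋯ e^{g₁} H e^{-g₁} ⋯ e^{-g_k}` with `g₁, …, g_k ∈ 𝔤`. Then every iterated
commutator `[g₁, [g₂, ⋯ [g_L, H] ⋯]]` with `g₁, …, g_L ∈ 𝔤` belongs to `𝒪`. -/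
theorem iterated_commutator_mem_span_conj_orbit
    (n : ℕ) (𝔤 : Set (Matrix (Fin n) (Fin n) ℂ)) (H : Matrix (Fin n) (Fin n) ℂ)
    (hsmul : ∀ (r : ℝ), ∀ g ∈ 𝔤, r • g ∈ 𝔤)
    (𝒪 : Submodule ℝ (Matrix (Fin n) (Fin n) ℂ))
    (h𝒪 : 𝒪 = Submodule.span ℝ
      { X : Matrix (Fin n) (Fin n) ℂ |
        ∃ l : List (Matrix (Fin n) (Fin n) ℂ), (∀ g ∈ l, g ∈ 𝔤) ∧
          X = (l.reverse.map fun g => NormedSpace.exp g).prod * H *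
            (l.map fun g => NormedSpace.exp (-g)).prod })
    (l : List (Matrix (Fin n) (Fin n) ℂ)) (hl : ∀ g ∈ l, g ∈ 𝔤) :
    l.foldr (fun g X => g * X - X * g) H ∈ 𝒪 := by
  subst h𝒪
  set S : Set (Matrix (Fin n) (Fin n) ℂ) :=
    { X : Matrix (Fin n) (Fin n) ℂ |
        ∃ l : List (Matrix (Fin n) (Fin n) ℂ), (∀ g ∈ l, g ∈ 𝔤) ∧
          X = (l.reverse.map fun g => NormedSpace.exp g).prod * H *
            (l.map fun g => NormedSpace.exp (-g)).prod } with hS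
  induction l with
  | nil =>
    simp only [List.foldr_nil]
    exact Submodule.subset_span ⟨[], by simp, by simp⟩
  | cons g t ih =>
    have hg : g ∈ 𝔤 := hl g (List.mem_cons_self)
    have hX : t.foldr (fun g X => g * X - X * g) H ∈ Submodule.span ℝ S :=
      ih (fun x hx => hl x (List.mem_cons_of_mem g hx))
    simp only [List.foldr_cons]
    set X := t.foldr (fun g X => g * X - X * g) H with hXdef
    clear_value X
    set L : Matrix (Fin n) (Fin n) ℂ →ₗ[ℝ] Matrix (Fin n) (Fin n) ℂ :=
      LinearMap.mulLeft ℝ g - LinearMap.mulRight ℝ g with hL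
    have key : Submodule.span ℝ S ≤ (Submodule.span ℝ S).comap L := by
      rw [Submodule.span_le]
      intro Y hY
      obtain ⟨l', hl', rfl⟩ := hY
      simp only [SetLike.mem_coe, Submodule.mem_comap, hL, LinearMap.sub_apply,
        LinearMap.mulLeft_apply, LinearMap.mulRight_apply]
      apply ad_mem_aux
      intro s
      apply Submodule.subset_span
      refine ⟨l' ++ [s • g], ?_, ?_⟩
      · intro x hx
        rcases List.mem_append.mp hx with h | h
        · exact hl' x h
        · simp only [List.mem_singleton] at h
          subst h
          exact hsmul s g hg
      · simp [mul_assoc]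
    have := key hX
    simpa [hL] using this
end

section
/- Let $\mathfrak{g}$ be a real Lie subalgebra of $M_n(\mathbb{C})$ (a real subspace closed under the commutator) and let $H\in M_n(\mathbb{C})$. Define $\mathscr{C}$ as the real linear span of all iterated commutators $[g_1,[g_2,\cdots[g_L,H]\cdots]]$ with $L\ge 0$ and $g_1,\dots,g_L\in\mathfrak{g}$, and define $\mathscr{O}$ as the real linear span of $\{\,e^{g_k}\cdots e^{g_1}\,H\,e^{-g_1}\cdots e^{-g_k} : k\ge 0,\ g_1,\dots,g_k\in\mathfrak{g}\,\}$. Then $\mathscr{C}=\mathscr{O}$. -/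
open NormedSpace

namespace SpanConjOrbitAux

attribute [local instance] Matrix.linftyOpNormedRing Matrix.linftyOpNormedAlgebra

variable {n : ℕ}

local notation "E" => Matrix (Fin n) (Fin n) ℂ

theorem aux_conj_mem (S : Submodule ℝ E) (g : E)
    (hS : ∀ x ∈ S, g * x - x * g ∈ S) {X : E} (hX : X ∈ S) :
    exp g * X * exp (-g) ∈ S := by
  set A : Module.End ℝ E := LinearMap.mulLeft ℝ g with hA
  set B : Module.End ℝ E := LinearMap.mulRight ℝ (-g) with hB
  have hAB : Commute A B := by
    refine LinearMap.ext fun x => ?_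
    simp [hA, hB, Module.End.mul_apply, mul_assoc]
  set f : ℕ → E := fun i => ((i.factorial : ℝ))⁻¹ • g ^ i * X with hf
  set w : ℕ → E := fun j => ((j.factorial : ℝ))⁻¹ • (-g) ^ j with hw
  set c : ℕ → E := fun k => ∑ kl ∈ Finset.HasAntidiagonal.antidiagonal k, f kl.1 * w kl.2 with hc
  -- each `(A+B)^k X` is in `S`
  have hDmem : ∀ x ∈ S, (A + B) x ∈ S := by
    intro x hx
    have := hS x hx
    simpa [hA, hB, mul_neg, sub_eq_add_neg] using this
  have hDk : ∀ k : ℕ, ((A + B) ^ k) X ∈ S := by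
    intro k
    induction k with
    | zero => simpa using hX
    | succ k ih =>
      have := hDmem _ ih
      simpa [pow_succ', Module.End.mul_apply] using this
  -- the binomial identity
  have hkey : ∀ k : ℕ, c k = ((k.factorial : ℝ))⁻¹ • (((A + B) ^ k) X) := by
    intro k
    simp only [hc]
    rw [Finset.Nat.sum_antidiagonal_eq_sum_range_succ_mk]
    rw [hAB.add_pow, LinearMap.sum_apply, Finset.smul_sum]
    refine Finset.sum_congr rfl fun m hm => ?_
    have hmk : m ≤ k := Nat.lt_succ_iff.mp (Finset.mem_range.mp hm)
    have hterm : ((A ^ m * B ^ (k - m) * ((k.choose m : ℕ) : Module.End ℝ E))) X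
        = (k.choose m : ℝ) • (g ^ m * (X * (-g) ^ (k - m))) := by
      simp only [hA, hB, Module.End.mul_apply, LinearMap.pow_mulLeft, LinearMap.pow_mulRight,
        Module.End.natCast_apply, LinearMap.mulLeft_apply, LinearMap.mulRight_apply]
      simp [← Nat.cast_smul_eq_nsmul ℝ, smul_mul_assoc, mul_smul_comm]
    rw [hterm, hf, hw]
    have hcoeff : ((m.factorial : ℝ))⁻¹ * (((k - m).factorial : ℝ))⁻¹
        = ((k.factorial : ℝ))⁻¹ * (k.choose m : ℝ) := by
      rw [Nat.cast_choose ℝ hmk]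
      have h1 : (m.factorial : ℝ) ≠ 0 := Nat.cast_ne_zero.mpr m.factorial_ne_zero
      have h2 : (((k - m).factorial : ℝ)) ≠ 0 := Nat.cast_ne_zero.mpr (k - m).factorial_ne_zero
      have h3 : (k.factorial : ℝ) ≠ 0 := Nat.cast_ne_zero.mpr k.factorial_ne_zero
      field_simp
    calc ((m.factorial : ℝ))⁻¹ • g ^ m * X * (((k - m).factorial : ℝ))⁻¹ • (-g) ^ (k - m)
        = (((m.factorial : ℝ))⁻¹ * (((k - m).factorial : ℝ))⁻¹)
            • (g ^ m * (X * (-g) ^ (k - m))) := by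
          simp [smul_mul_assoc, mul_smul_comm, smul_smul, mul_assoc, mul_comm]
      _ = ((k.factorial : ℝ))⁻¹ • ((k.choose m : ℝ) • (g ^ m * (X * (-g) ^ (k - m)))) := by
          rw [hcoeff, mul_smul]
  -- summability
  have hnf : Summable fun i => ‖f i‖ := by
    have h1 : Summable fun i => ‖((i.factorial : ℝ))⁻¹ • g ^ i‖ * ‖X‖ :=
      (norm_expSeries_summable' (𝕂 := ℝ) g).mul_right ‖X‖
    refine h1.of_nonneg_of_le (fun _ => norm_nonneg _) fun i => ?_
    exact norm_mul_le _ _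
  have hnw : Summable fun j => ‖w j‖ := norm_expSeries_summable' (𝕂 := ℝ) (-g)
  have hfX : HasSum f (exp g * X) := (exp_series_hasSum_exp' (𝕂 := ℝ) g).mul_right X
  have hwS : HasSum w (exp (-g)) := exp_series_hasSum_exp' (𝕂 := ℝ) (-g)
  have hc_sum : Summable c :=
    (summable_norm_sum_mul_antidiagonal_of_summable_norm hnf hnw).of_norm
  have heq : exp g * X * exp (-g) = ∑' k, c k := by
    rw [← hfX.tsum_eq, ← hwS.tsum_eq]
    exact tsum_mul_tsum_eq_tsum_sum_antidiagonal_of_summable_norm hnf hnw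
  rw [heq]
  refine S.closed_of_finiteDimensional.mem_of_tendsto hc_sum.hasSum.tendsto_sum_nat
    (Filter.Eventually.of_forall fun s => ?_)
  refine S.sum_mem fun k _ => ?_
  rw [hkey k]
  exact S.smul_mem _ (hDk k)

theorem aux_ad_mem (S : Submodule ℝ E) (g : E)
    (hS : ∀ t : ℝ, ∀ x ∈ S, exp (t • g) * x * exp (-(t • g)) ∈ S)
    {X : E} (hX : X ∈ S) : g * X - X * g ∈ S := by
  have hf : HasDerivAt (fun t : ℝ => exp (t • g) * X * exp (t • (-g)))
      (g * X - X * g) 0 := by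
    have h1 := hasDerivAt_exp_smul_const' (𝕂 := ℝ) (𝔸 := E) g 0
    have h2 := hasDerivAt_exp_smul_const' (𝕂 := ℝ) (𝔸 := E) (-g) 0
    have h3 := (h1.mul_const X).mul h2
    simp [sub_eq_add_neg, mul_neg, neg_mul, Pi.mul_def] at h3 ⊢
    exact h3
  replace hf := hasDerivAt_iff_tendsto_slope.mp hf
  refine S.closed_of_finiteDimensional.mem_of_tendsto hf
    (Filter.Eventually.of_forall fun t => ?_)
  have hmem : exp (t • g) * X * exp (t • (-g)) ∈ S := by
    have := hS t X hX
    simpa [smul_neg] using this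
  rw [slope_def_module]
  refine S.smul_mem _ (S.sub_mem hmem ?_)
  simpa using hX

end SpanConjOrbitAux

/-- Let `𝔤` be a real Lie subalgebra of `Mₙ(ℂ)` (a real subspace closed under the
commutator) and `H ∈ Mₙ(ℂ)`. Let `𝒞` be the real linear span of all iterated commutators
`[g₁, [g₂, ⋯ [g_L, H] ⋯]]` with `g₁, …, g_L ∈ 𝔤`, and let `𝒪` be the real linear span of
all conjugates `e^{g_k} ⋯ e^{g₁} H e^{-g₁} ⋯ e^{-g_k}` with `g₁, …, g_k ∈ 𝔤`.
Then `𝒞 = 𝒪`. -/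
theorem span_iterated_commutator_eq_span_conj_orbit
    (n : ℕ) (𝔤 : Submodule ℝ (Matrix (Fin n) (Fin n) ℂ))
    (hLie : ∀ x ∈ 𝔤, ∀ y ∈ 𝔤, x * y - y * x ∈ 𝔤)
    (H : Matrix (Fin n) (Fin n) ℂ)
    (𝒞 𝒪 : Submodule ℝ (Matrix (Fin n) (Fin n) ℂ))
    (h𝒞 : 𝒞 = Submodule.span ℝ
      { X : Matrix (Fin n) (Fin n) ℂ |
        ∃ l : List (Matrix (Fin n) (Fin n) ℂ), (∀ g ∈ l, g ∈ 𝔤) ∧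
          X = l.foldr (fun g Y => g * Y - Y * g) H })
    (h𝒪 : 𝒪 = Submodule.span ℝ
      { X : Matrix (Fin n) (Fin n) ℂ |
        ∃ l : List (Matrix (Fin n) (Fin n) ℂ), (∀ g ∈ l, g ∈ 𝔤) ∧
          X = (l.reverse.map fun g => NormedSpace.exp g).prod * H *
            (l.map fun g => NormedSpace.exp (-g)).prod }) :
    𝒞 = 𝒪 := by
  have hH𝒞 : H ∈ 𝒞 := h𝒞 ▸ Submodule.subset_span ⟨[], by simp, by simp⟩
  have hH𝒪 : H ∈ 𝒪 := h𝒪 ▸ Submodule.subset_span ⟨[], by simp, by simp⟩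
  have hC_ad : ∀ g ∈ 𝔤, ∀ x ∈ 𝒞, g * x - x * g ∈ 𝒞 := by
    intro g hg x hx
    rw [h𝒞] at hx ⊢
    induction hx using Submodule.span_induction with
    | mem y hy =>
      obtain ⟨l, hl, rfl⟩ := hy
      refine Submodule.subset_span ⟨g :: l, fun a ha => ?_, rfl⟩
      rcases List.mem_cons.mp ha with h | h
      · subst h; exact hg
      · exact hl a h
    | zero => simpa using Submodule.zero_mem _
    | add x y hx hy ihx ihy =>
      have h : g * (x + y) - (x + y) * g = (g * x - x * g) + (g * y - y * g) := by
        noncomm_ring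
      rw [h]; exact Submodule.add_mem _ ihx ihy
    | smul a x hx ihx =>
      have h : g * (a • x) - (a • x) * g = a • (g * x - x * g) := by
        rw [mul_smul_comm, smul_mul_assoc, smul_sub]
      rw [h]; exact Submodule.smul_mem _ a ihx
  have hC_conj : ∀ g ∈ 𝔤, ∀ x ∈ 𝒞,
      NormedSpace.exp g * x * NormedSpace.exp (-g) ∈ 𝒞 :=
    fun g hg x hx => SpanConjOrbitAux.aux_conj_mem 𝒞 g (hC_ad g hg) hx
  have hO_conj : ∀ g ∈ 𝔤, ∀ x ∈ 𝒪,
      NormedSpace.exp g * x * NormedSpace.exp (-g) ∈ 𝒪 := by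
    intro g hg x hx
    rw [h𝒪] at hx ⊢
    induction hx using Submodule.span_induction with
    | mem y hy =>
      obtain ⟨l, hl, rfl⟩ := hy
      refine Submodule.subset_span ⟨l ++ [g], fun a ha => ?_, ?_⟩
      · rcases List.mem_append.mp ha with h | h
        · exact hl a h
        · simp only [List.mem_singleton] at h; subst h; exact hg
      · simp [mul_assoc]
    | zero => simpa using Submodule.zero_mem _
    | add x y hx hy ihx ihy =>
      have h : NormedSpace.exp g * (x + y) * NormedSpace.exp (-g)
          = NormedSpace.exp g * x * NormedSpace.exp (-g)
            + NormedSpace.exp g * y * NormedSpace.exp (-g) := by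
        rw [mul_add, add_mul]
      rw [h]; exact Submodule.add_mem _ ihx ihy
    | smul a x hx ihx =>
      have h : NormedSpace.exp g * (a • x) * NormedSpace.exp (-g)
          = a • (NormedSpace.exp g * x * NormedSpace.exp (-g)) := by
        rw [mul_smul_comm, smul_mul_assoc]
      rw [h]; exact Submodule.smul_mem _ a ihx
  have hO_ad : ∀ g ∈ 𝔤, ∀ x ∈ 𝒪, g * x - x * g ∈ 𝒪 :=
    fun g hg x hx => SpanConjOrbitAux.aux_ad_mem 𝒪 g
      (fun t y hy => hO_conj (t • g) (𝔤.smul_mem t hg) y hy) hx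
  apply le_antisymm
  · have key : ∀ l : List (Matrix (Fin n) (Fin n) ℂ), (∀ g ∈ l, g ∈ 𝔤) →
        l.foldr (fun g Y => g * Y - Y * g) H ∈ 𝒪 := by
      intro l
      induction l with
      | nil => intro _; simpa using hH𝒪
      | cons g t ih =>
        intro hgt
        have hY := ih fun a ha => hgt a (List.mem_cons_of_mem _ ha)
        have := hO_ad g (hgt g List.mem_cons_self) _ hY
        simpa using this
    rw [h𝒞, Submodule.span_le]
    rintro X ⟨l, hl, rfl⟩
    exact key l hl
  · have key : ∀ l : List (Matrix (Fin n) (Fin n) ℂ), (∀ g ∈ l, g ∈ 𝔤) → ∀ Y ∈ 𝒞,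
        (l.reverse.map fun g => NormedSpace.exp g).prod * Y *
          (l.map fun g => NormedSpace.exp (-g)).prod ∈ 𝒞 := by
      intro l
      induction l with
      | nil => intro _ Y hY; simpa using hY
      | cons g t ih =>
        intro hgt Y hY
        have h1 : NormedSpace.exp g * Y * NormedSpace.exp (-g) ∈ 𝒞 :=
          hC_conj g (hgt g List.mem_cons_self) Y hY
        have := ih (fun a ha => hgt a (List.mem_cons_of_mem _ ha)) _ h1
        simpa [mul_assoc] using this
    rw [h𝒪, Submodule.span_le]
    rintro X ⟨l, hl, rfl⟩
    exact key l hl H hH𝒞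
end

section
/- Let $H$ be an $n\times n$ complex matrix, $G$ a subset of the unitary group $U(n)$, and $T>0$. Let $\mathscr{A}$ be the set of all matrices of the form $\frac{1}{T}\int_0^{T}U(t)^{\dagger}H\,U(t)\,dt$ where $U:[0,T]\to M_n(\mathbb{C})$ ranges over step functions (piecewise-constant functions with finitely many pieces) taking values in $G$. Then the closure of $\mathscr{A}$ equals the closure of the convex hull of $\{V^{\dagger}HV : V\in G\}$ in $M_n(\mathbb{C})$. -/
open scoped Matrix
open MeasureTheory

attribute [local instance] Matrix.normedAddCommGroup Matrix.normedSpace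

section aux

variable {E : Type*} [NormedAddCommGroup E] [NormedSpace ℝ E]

lemma step_ae (f : ℝ → E) {a b : ℝ} (c : E) (hab : a ≤ b)
    (h : ∀ t ∈ Set.Ico a b, f t = c) :
    ∀ᵐ t ∂(volume : Measure ℝ), t ∈ Set.uIoc a b → f t = c := by
  rw [ae_iff]
  have hsub : {t : ℝ | ¬ (t ∈ Set.uIoc a b → f t = c)} ⊆ {b} := by
    intro t ht
    rw [Set.mem_setOf_eq, _root_.not_imp] at ht
    obtain ⟨htI, hne⟩ := ht
    rw [Set.uIoc_of_le hab] at htI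
    have hnot : t ∉ Set.Ico a b := fun hm => hne (h t hm)
    have : t = b := by
      by_contra hb
      exact hnot ⟨le_of_lt htI.1, lt_of_le_of_ne htI.2 hb⟩
    simp [this]
  exact measure_mono_null hsub (measure_singleton b)

lemma step_piece_integrable (f : ℝ → E) {a b : ℝ} (c : E) (hab : a ≤ b)
    (h : ∀ t ∈ Set.Ico a b, f t = c) :
    IntervalIntegrable f volume a b := by
  refine (intervalIntegrable_const (c := c)).congr_ae ?_
  have := (ae_restrict_iff' (μ := (volume : Measure ℝ)) measurableSet_uIoc).2
    (step_ae f c hab h)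
  exact (Filter.EventuallyEq.symm this)

lemma step_piece [CompleteSpace E] (f : ℝ → E) {a b : ℝ} (c : E) (hab : a ≤ b)
    (h : ∀ t ∈ Set.Ico a b, f t = c) :
    ∫ t in a..b, f t = (b - a) • c := by
  rw [intervalIntegral.integral_congr_ae (g := fun _ => c) (step_ae f c hab h),
    intervalIntegral.integral_const]

lemma step_integral [CompleteSpace E] (f : ℝ → E) (m : ℕ) (τ : ℕ → ℝ) (c : ℕ → E)
    (hmono : ∀ i < m, τ i ≤ τ (i + 1))
    (hstep : ∀ i < m, ∀ t ∈ Set.Ico (τ i) (τ (i + 1)), f t = c i) :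
    ∫ t in (τ 0)..(τ m), f t = ∑ i ∈ Finset.range m, (τ (i + 1) - τ i) • c i := by
  rw [← intervalIntegral.sum_integral_adjacent_intervals
      (fun k hk => step_piece_integrable f (c k) (hmono k hk) (hstep k hk))]
  exact Finset.sum_congr rfl fun k hk =>
    step_piece f (c k) (hmono k (Finset.mem_range.1 hk)) (hstep k (Finset.mem_range.1 hk))

end aux

/-- Let `H ∈ Mₙ(ℂ)`, `G` a subset of the unitary group, `T > 0`, and let `𝒜` be the set
of all matrices `(1/T) ∫₀ᵀ U(t)ᴴ H U(t) dt` where `U` ranges over step functions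
(piecewise-constant with finitely many pieces) on `[0,T]` taking values in `G`. Then the
closure of `𝒜` equals the closure of the convex hull of `{Vᴴ H V : V ∈ G}`. -/
theorem closure_step_averages_eq_closure_convexHull
    (n : ℕ) (H : Matrix (Fin n) (Fin n) ℂ) (G : Set (Matrix (Fin n) (Fin n) ℂ))
    (hG : ∀ V ∈ G, Vᴴ * V = 1) (T : ℝ) (hT : 0 < T)
    (𝒜 : Set (Matrix (Fin n) (Fin n) ℂ))
    (h𝒜 : 𝒜 = { X : Matrix (Fin n) (Fin n) ℂ |
      ∃ (U : ℝ → Matrix (Fin n) (Fin n) ℂ) (m : ℕ) (τ : ℕ → ℝ)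
        (V : ℕ → Matrix (Fin n) (Fin n) ℂ),
        τ 0 = 0 ∧ τ m = T ∧ (∀ i < m, τ i ≤ τ (i + 1)) ∧ (∀ i < m, V i ∈ G) ∧
        (∀ i < m, ∀ t ∈ Set.Ico (τ i) (τ (i + 1)), U t = V i) ∧
        X = (1 / T) • ∫ t in (0 : ℝ)..T, (U t)ᴴ * H * U t }) :
    closure 𝒜 =
      closure (convexHull ℝ { X : Matrix (Fin n) (Fin n) ℂ | ∃ V ∈ G, X = Vᴴ * H * V }) := by
  classical
  set S : Set (Matrix (Fin n) (Fin n) ℂ) :=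
    { X : Matrix (Fin n) (Fin n) ℂ | ∃ V ∈ G, X = Vᴴ * H * V } with hS
  suffices hmain : 𝒜 = convexHull ℝ S by rw [hmain]
  ext X
  constructor
  · -- 𝒜 ⊆ convexHull
    intro hX
    rw [h𝒜] at hX
    obtain ⟨U, m, τ, V, hτ0, hτm, hmono, hVG, hU, hXeq⟩ := hX
    have hint : ∫ t in (0 : ℝ)..T, (U t)ᴴ * H * U t
        = ∑ i ∈ Finset.range m, (τ (i + 1) - τ i) • ((V i)ᴴ * H * V i) := by
      rw [← hτ0, ← hτm]
      exact step_integral (fun t => (U t)ᴴ * H * U t) m τ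
        (fun i => (V i)ᴴ * H * V i) hmono
        (fun i hi t ht => by
          show (U t)ᴴ * H * U t = (V i)ᴴ * H * V i
          rw [hU i hi t ht])
    rw [hXeq, hint, Finset.smul_sum]
    have hrw : ∀ i ∈ Finset.range m,
        (1 / T) • ((τ (i + 1) - τ i) • ((V i)ᴴ * H * V i))
          = ((τ (i + 1) - τ i) / T) • ((V i)ᴴ * H * V i) := by
      intro i _
      rw [smul_smul]
      ring_nf
    rw [Finset.sum_congr rfl hrw]
    refine (convex_convexHull ℝ S).sum_mem ?_ ?_ ?_
    · intro i hi
      exact div_nonneg (sub_nonneg.2 (hmono i (Finset.mem_range.1 hi))) hT.le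
    · rw [← Finset.sum_div, Finset.sum_range_sub τ m, hτm, hτ0, sub_zero,
        div_self hT.ne']
    · intro i hi
      exact subset_convexHull ℝ S ⟨V i, hVG i (Finset.mem_range.1 hi), rfl⟩
  · -- convexHull ⊆ 𝒜
    intro hX
    rw [convexHull_eq] at hX
    obtain ⟨ι, t, w, z, hw0, hw1, hzS, hcm⟩ := hX
    rw [Finset.centerMass_eq_of_sum_1 t z hw1] at hcm
    set m := t.card with hm
    set e := t.equivFin with he
    -- weights indexed by ℕ
    set w' : ℕ → ℝ := fun k => if h : k < m then w (e.symm ⟨k, h⟩) else 0 with hw'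
    have hw'0 : ∀ k, 0 ≤ w' k := by
      intro k
      simp only [hw']
      split
      · exact hw0 _ (e.symm _).2
      · exact le_refl 0
    have hw'sum : ∑ k ∈ Finset.range m, w' k = 1 := by
      rw [← Fin.sum_univ_eq_sum_range w' m]
      have : ∀ i : Fin m, w' ↑i = w ↑(e.symm i) := by
        intro i; simp [hw']
      rw [Finset.sum_congr rfl fun i _ => this i]
      rw [Equiv.sum_comp e.symm (fun j : {x // x ∈ t} => w ↑j), Finset.sum_coe_sort t w]
      exact hw1
    -- unitaries
    have hchoice : ∀ k : Fin m, ∃ V, V ∈ G ∧ z ↑(e.symm k) = Vᴴ * H * V :=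
      fun k => hzS _ (e.symm k).2
    set V : ℕ → Matrix (Fin n) (Fin n) ℂ :=
      fun k => if h : k < m then (hchoice ⟨k, h⟩).choose else 1 with hV
    have hVG : ∀ k (h : k < m), V k ∈ G := by
      intro k h
      simp only [hV, dif_pos h]
      exact (hchoice ⟨k, h⟩).choose_spec.1
    have hVz : ∀ k (h : k < m), (V k)ᴴ * H * V k = z ↑(e.symm ⟨k, h⟩) := by
      intro k h
      simp only [hV, dif_pos h]
      exact ((hchoice ⟨k, h⟩).choose_spec.2).symm
    -- partition points
    set τ : ℕ → ℝ := fun k => T * ∑ i ∈ Finset.range k, w' i with hτ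
    have hτ0 : τ 0 = 0 := by simp [hτ]
    have hτm : τ m = T := by simp [hτ, hw'sum]
    have hτsucc : ∀ k, τ (k + 1) = τ k + T * w' k := by
      intro k
      simp only [hτ, Finset.sum_range_succ]
      ring
    have hτmono : Monotone τ := by
      apply monotone_nat_of_le_succ
      intro k
      rw [hτsucc k]
      nlinarith [hw'0 k, hT.le]
    -- step function
    set U : ℝ → Matrix (Fin n) (Fin n) ℂ :=
      fun s => V (Nat.findGreatest (fun j => τ j ≤ s) m) with hUdef
    have hU : ∀ i < m, ∀ s ∈ Set.Ico (τ i) (τ (i + 1)), U s = V i := by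
      intro i hi s hs
      have hfg : Nat.findGreatest (fun j => τ j ≤ s) m = i := by
        rw [Nat.findGreatest_eq_iff]
        refine ⟨hi.le, fun _ => hs.1, ?_⟩
        intro j hij hjm hj
        have : τ (i + 1) ≤ τ j := hτmono hij
        exact absurd (le_trans this hj) (not_le.2 hs.2)
      simp only [hUdef, hfg]
    set z' : ℕ → Matrix (Fin n) (Fin n) ℂ :=
      fun k => if h : k < m then z ↑(e.symm ⟨k, h⟩) else 0 with hz'
    have hXsum : ∑ k ∈ Finset.range m, w' k • z' k = X := by
      rw [← Fin.sum_univ_eq_sum_range (fun k => w' k • z' k) m]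
      have : ∀ i : Fin m, w' ↑i • z' ↑i = w ↑(e.symm i) • z ↑(e.symm i) := by
        intro i; simp [hw', hz']
      rw [Finset.sum_congr rfl fun i _ => this i,
        Equiv.sum_comp e.symm (fun j : {x // x ∈ t} => w ↑j • z ↑j),
        Finset.sum_coe_sort t (fun j => w j • z j)]
      exact hcm
    have hsum : ∑ k ∈ Finset.range m, (τ (k + 1) - τ k) • ((V k)ᴴ * H * V k)
        = T • X := by
      have h1 : ∀ k ∈ Finset.range m,
          (τ (k + 1) - τ k) • ((V k)ᴴ * H * V k) = T • (w' k • z' k) := by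
        intro k hk
        have hkm := Finset.mem_range.1 hk
        rw [hVz k hkm, hτsucc k]
        simp only [hz', dif_pos hkm]
        rw [add_sub_cancel_left, mul_smul]
      rw [Finset.sum_congr rfl h1, ← Finset.smul_sum, hXsum]
    rw [h𝒜]
    refine ⟨U, m, τ, V, hτ0, hτm, fun i hi => hτmono (Nat.le_succ i),
      fun i hi => hVG i hi, hU, ?_⟩
    have hint : ∫ s in (τ 0)..(τ m), (U s)ᴴ * H * U s = T • X := by
      rw [step_integral (fun s => (U s)ᴴ * H * U s) m τ
        (fun k => (V k)ᴴ * H * V k) (fun i _ => hτmono (Nat.le_succ i))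
        (fun i hi s hs => by
          show (U s)ᴴ * H * U s = (V i)ᴴ * H * V i
          rw [hU i hi s hs])]
      exact hsum
    rw [hτ0, hτm] at hint
    rw [hint, smul_smul, one_div, inv_mul_cancel₀ hT.ne', one_smul]
end
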